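/- arXiv:1406.6963 — 2 statements merged into one kernel-verified Lean document; each statement's English description precedes it below -/
import Mathlib

section
/- There exist constants c > 0, C > 0 and B₀ (depending on the βⱼ and ηⱼ) such that for all B ≥ B₀: c·B(log B)^{−3} ≤ J(B) ≤ C·B(log B)^{−3}, where J(B) is the number of integer quadruples (m₁,m₂,m₃,m₄) with mⱼ ∈ I_j for j = 1,…,4 and β₁m₁ + β₂m₂ + β₃m₃ + β₄m₄ = 0. -/
/-- The interval `I = [ηB^{1/3} - B^{1/3}/log B, ηB^{1/3} + B^{1/3}/log B]`. -/
noncomputable def shortInterval (η B : ℝ) : Set ℝ :=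
  Set.Icc (η * B ^ ((1 : ℝ) / 3) - B ^ ((1 : ℝ) / 3) / Real.log B)
          (η * B ^ ((1 : ℝ) / 3) + B ^ ((1 : ℝ) / 3) / Real.log B)

/-- `J(B)`: the number of integer quadruples `(m₁,m₂,m₃,m₄)` with `mⱼ ∈ I_j` and
`β₁m₁+β₂m₂+β₃m₃+β₄m₄ = 0`. -/
noncomputable def JB (β : Fin 4 → ℤ) (η : Fin 4 → ℝ) (B : ℝ) : ℕ :=
  Set.ncard {m : Fin 4 → ℤ | (∀ j, ((m j : ℝ) ∈ shortInterval (η j) B)) ∧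
    β 0 * m 0 + β 1 * m 1 + β 2 * m 2 + β 3 * m 3 = 0}

lemma aux_toNat_cast_le {x : ℤ} {r : ℝ} (hr : 0 ≤ r) (h : (x : ℝ) ≤ r) :
    ((x.toNat : ℕ) : ℝ) ≤ r := by
  rcases le_or_gt 0 x with hx | hx
  · have : ((x.toNat : ℕ) : ℝ) = (x : ℝ) := by
      exact_mod_cast congrArg (Int.cast : ℤ → ℝ) (Int.toNat_of_nonneg hx)
    rwa [this]
  · rw [Int.toNat_of_nonpos hx.le]; simpa using hr

lemma aux_le_toNat_cast (x : ℤ) : (x : ℝ) ≤ ((x.toNat : ℕ) : ℝ) := by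
  exact_mod_cast Int.self_le_toNat x

set_option maxHeartbeats 1600000 in
/-- The two-sided bound `B(log B)⁻³ ≪ J(B) ≪ B(log B)⁻³` from Lemma 2. -/
theorem singular_integral_count_bounds
    (β : Fin 4 → ℤ) (hβ : ∀ j, β j = 1 ∨ β j = -1)
    (η : Fin 4 → ℝ) (hη : ∀ j, 0 < η j)
    (hrel : (β 0 : ℝ) * η 0 + (β 1 : ℝ) * η 1 + (β 2 : ℝ) * η 2 + (β 3 : ℝ) * η 3 = 0) :
    ∃ c : ℝ, 0 < c ∧ ∃ C : ℝ, 0 < C ∧ ∃ B₀ : ℝ, ∀ B : ℝ, B₀ ≤ B →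
      c * B / Real.log B ^ 3 ≤ (JB β η B : ℝ) ∧
      (JB β η B : ℝ) ≤ C * B / Real.log B ^ 3 := by
  refine ⟨1/64, by norm_num, 27, by norm_num, 48^4, fun B hB => ?_⟩
  have hB1 : (1 : ℝ) < B := lt_of_lt_of_le (by norm_num) hB
  have hB0 : (0 : ℝ) < B := lt_trans one_pos hB1
  set T : ℝ := B ^ ((1 : ℝ)/3) with hTdef
  set L : ℝ := Real.log B with hLdef
  have hL : 0 < L := Real.log_pos hB1
  have hT : 0 < T := Real.rpow_pos_of_pos hB0 _
  set δ : ℝ := T / L with hδdef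
  have hδ0 : 0 < δ := div_pos hT hL
  -- δ ≥ 4
  have hδ4 : 4 ≤ δ := by
    have hlog : L ≤ 12 * B ^ ((1 : ℝ)/12) := by
      have h1 : Real.log (B ^ ((1 : ℝ)/12)) = (1/12) * L := Real.log_rpow hB0 _
      have h2 : Real.log (B ^ ((1 : ℝ)/12)) ≤ B ^ ((1 : ℝ)/12) - 1 :=
        Real.log_le_sub_one_of_pos (Real.rpow_pos_of_pos hB0 _)
      nlinarith [Real.rpow_pos_of_pos hB0 ((1 : ℝ)/12)]
    have hq : B ^ ((1 : ℝ)/4) / 12 ≤ δ := by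
      have h3 : T / (12 * B ^ ((1 : ℝ)/12)) ≤ T / L := by
        apply div_le_div_of_nonneg_left hT.le hL hlog
      have h4 : T / (12 * B ^ ((1 : ℝ)/12)) = B ^ ((1 : ℝ)/4) / 12 := by
        have hsplit : T = B ^ ((1:ℝ)/4) * B ^ ((1:ℝ)/12) := by
          rw [hTdef, ← Real.rpow_add hB0]; norm_num
        rw [div_eq_div_iff (by positivity) (by norm_num : (12:ℝ) ≠ 0), hsplit]
        ring
      rw [← h4]; exact h3
    have h48 : (48 : ℝ) ≤ B ^ ((1 : ℝ)/4) := by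
      have : ((48:ℝ)^4) ^ ((1:ℝ)/4) ≤ B ^ ((1:ℝ)/4) :=
        Real.rpow_le_rpow (by positivity) hB (by norm_num)
      calc (48 : ℝ) = ((48:ℝ)^4) ^ ((1:ℝ)/4) := by
            rw [← Real.rpow_natCast (48:ℝ) 4, ← Real.rpow_mul (by norm_num)]
            norm_num
        _ ≤ B ^ ((1:ℝ)/4) := this
    linarith
  have hδ1 : 1 ≤ δ := by linarith
  -- T³ = B
  have hTB : T ^ 3 = B := by
    rw [hTdef, ← Real.rpow_natCast (B ^ ((1:ℝ)/3)) 3, ← Real.rpow_mul hB0.le]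
    norm_num
  have hδcube : δ ^ 3 = B / L ^ 3 := by rw [hδdef, div_pow, hTB]
  -- the set
  set S : Set (Fin 4 → ℤ) := {m : Fin 4 → ℤ |
      (∀ j, ((m j : ℝ) ∈ shortInterval (η j) B)) ∧
      β 0 * m 0 + β 1 * m 1 + β 2 * m 2 + β 3 * m 3 = 0} with hSdef
  have hJB : JB β η B = S.ncard := rfl
  have hmem : ∀ (ηj x : ℝ), x ∈ shortInterval ηj B ↔
      (ηj * T - δ ≤ x ∧ x ≤ ηj * T + δ) := by
    intro ηj x
    rw [shortInterval, Set.mem_Icc, ← hTdef, ← hLdef, ← hδdef]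
  have hβsq : ∀ j, β j * β j = 1 := by
    intro j; rcases hβ j with h | h <;> rw [h] <;> norm_num
  have hβ3 : β 3 ≠ 0 := by rcases hβ 3 with h | h <;> rw [h] <;> norm_num
  -- finiteness
  have hfinS : S.Finite := by
    apply Set.Finite.subset
      (Set.Finite.pi (fun j : Fin 4 =>
        Set.finite_Icc (⌈η j * T - δ⌉) (⌊η j * T + δ⌋)))
    intro m hm
    rw [Set.mem_univ_pi]
    intro j
    obtain ⟨h1, h2⟩ := (hmem (η j) (m j : ℝ)).1 (hm.1 j)
    exact ⟨Int.ceil_le.2 h1, Int.le_floor.2 h2⟩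
  constructor
  · -- LOWER BOUND
    set Q : Finset (ℤ × ℤ × ℤ) :=
      (Finset.Icc ⌈η 0 * T - δ/4⌉ ⌊η 0 * T + δ/4⌋) ×ˢ
      ((Finset.Icc ⌈η 1 * T - δ/4⌉ ⌊η 1 * T + δ/4⌋) ×ˢ
       (Finset.Icc ⌈η 2 * T - δ/4⌉ ⌊η 2 * T + δ/4⌋)) with hQdef
    set h : ℤ × ℤ × ℤ → (Fin 4 → ℤ) := fun p =>
      ![p.1, p.2.1, p.2.2, -β 3 * (β 0 * p.1 + β 1 * p.2.1 + β 2 * p.2.2)] with hhdef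
    have hinj : Function.Injective h := by
      intro p q hpq
      have e0 : p.1 = q.1 := congrFun hpq 0
      have e1 : p.2.1 = q.2.1 := congrFun hpq 1
      have e2 : p.2.2 = q.2.2 := congrFun hpq 2
      exact Prod.ext e0 (Prod.ext e1 e2)
    have hsub : h '' ↑Q ⊆ S := by
      rintro _ ⟨p, hp, rfl⟩
      rw [hQdef] at hp
      simp only [Finset.coe_mem, Finset.mem_coe, Finset.mem_product, Finset.mem_Icc] at hp
      obtain ⟨⟨a1, a2⟩, ⟨b1, b2⟩, ⟨c1, c2⟩⟩ := hp
      have ra1 : η 0 * T - δ/4 ≤ (p.1 : ℝ) := Int.ceil_le.1 a1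
      have ra2 : (p.1 : ℝ) ≤ η 0 * T + δ/4 := Int.le_floor.1 a2
      have rb1 : η 1 * T - δ/4 ≤ (p.2.1 : ℝ) := Int.ceil_le.1 b1
      have rb2 : (p.2.1 : ℝ) ≤ η 1 * T + δ/4 := Int.le_floor.1 b2
      have rc1 : η 2 * T - δ/4 ≤ (p.2.2 : ℝ) := Int.ceil_le.1 c1
      have rc2 : (p.2.2 : ℝ) ≤ η 2 * T + δ/4 := Int.le_floor.1 c2
      have hrelT2 : (β 0 : ℝ) * (η 0 * T) + (β 1 : ℝ) * (η 1 * T)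
          + (β 2 : ℝ) * (η 2 * T) + (β 3 : ℝ) * (η 3 * T) = 0 := by
        have := congrArg (fun z : ℝ => z * T) hrel
        simpa using by linear_combination T * hrel
      have goal0 : ((p.1 : ℤ) : ℝ) ∈ shortInterval (η 0) B := by
        rw [hmem]; constructor <;> linarith
      have goal1 : ((p.2.1 : ℤ) : ℝ) ∈ shortInterval (η 1) B := by
        rw [hmem]; constructor <;> linarith
      have goal2 : ((p.2.2 : ℤ) : ℝ) ∈ shortInterval (η 2) B := by
        rw [hmem]; constructor <;> linarith
      have goal3 : (((-β 3 * (β 0 * p.1 + β 1 * p.2.1 + β 2 * p.2.2)) : ℤ) : ℝ)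
          ∈ shortInterval (η 3) B := by
        rw [hmem]
        push_cast
        rcases hβ 0 with h0 | h0 <;> rcases hβ 1 with h1 | h1 <;>
          rcases hβ 2 with h2 | h2 <;> rcases hβ 3 with h3 | h3 <;>
          simp only [h0, h1, h2, h3, Int.cast_one, Int.cast_neg] at hrelT2 ⊢ <;>
          constructor <;> linarith
      constructor
      · intro j
        fin_cases j
        · exact goal0
        · exact goal1
        · exact goal2
        · exact goal3
      · show β 0 * (h p 0) + β 1 * (h p 1) + β 2 * (h p 2) + β 3 * (h p 3) = 0
        show β 0 * p.1 + β 1 * p.2.1 + β 2 * p.2.2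
            + β 3 * (-β 3 * (β 0 * p.1 + β 1 * p.2.1 + β 2 * p.2.2)) = 0
        linear_combination (-(β 0 * p.1 + β 1 * p.2.1 + β 2 * p.2.2)) * hβsq 3
    -- count Q from below
    have hcard : ((Q.card : ℕ) : ℝ) ≥ (δ/4) * ((δ/4) * (δ/4)) := by
      have hQcard : Q.card =
          (⌊η 0 * T + δ/4⌋ + 1 - ⌈η 0 * T - δ/4⌉).toNat *
          ((⌊η 1 * T + δ/4⌋ + 1 - ⌈η 1 * T - δ/4⌉).toNat *
           (⌊η 2 * T + δ/4⌋ + 1 - ⌈η 2 * T - δ/4⌉).toNat) := by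
        rw [hQdef, Finset.card_product, Finset.card_product,
          Int.card_Icc, Int.card_Icc, Int.card_Icc]
      have key : ∀ x : ℝ, δ/4 ≤ (((⌊x + δ/4⌋ + 1 - ⌈x - δ/4⌉).toNat : ℕ) : ℝ) := by
        intro x
        refine le_trans ?_ (aux_le_toNat_cast _)
        push_cast
        have hf : x + δ/4 - 1 < (⌊x + δ/4⌋ : ℝ) := Int.sub_one_lt_floor _
        have hc : (⌈x - δ/4⌉ : ℝ) < x - δ/4 + 1 := Int.ceil_lt_add_one _
        linarith
      rw [hQcard]
      push_cast
      have k0 := key (η 0 * T)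
      have k1 := key (η 1 * T)
      have k2 := key (η 2 * T)
      have hq4 : (0:ℝ) ≤ δ/4 := by linarith
      exact mul_le_mul k0 (mul_le_mul k1 k2 hq4 (by positivity)) (by positivity)
        (by positivity)
    have hchain : Q.card ≤ S.ncard := by
      calc Q.card = (↑Q : Set (ℤ × ℤ × ℤ)).ncard := (Set.ncard_coe_finset Q).symm
        _ = (h '' ↑Q).ncard := (Set.ncard_image_of_injective _ hinj).symm
        _ ≤ S.ncard := Set.ncard_le_ncard hsub hfinS
    have : (1:ℝ)/64 * B / L ^ 3 = (δ/4) * ((δ/4) * (δ/4)) := by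
      have : (δ/4) * ((δ/4) * (δ/4)) = δ ^ 3 / 64 := by ring
      rw [this, hδcube]; ring
    rw [hJB, this]
    calc (δ/4) * ((δ/4) * (δ/4)) ≤ ((Q.card : ℕ) : ℝ) := hcard
      _ ≤ (S.ncard : ℝ) := by exact_mod_cast hchain
  · -- UPPER BOUND
    set F : Finset (ℤ × ℤ × ℤ) :=
      (Finset.Icc ⌈η 0 * T - δ⌉ ⌊η 0 * T + δ⌋) ×ˢ
      ((Finset.Icc ⌈η 1 * T - δ⌉ ⌊η 1 * T + δ⌋) ×ˢ
       (Finset.Icc ⌈η 2 * T - δ⌉ ⌊η 2 * T + δ⌋)) with hFdef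
    set g : (Fin 4 → ℤ) → ℤ × ℤ × ℤ := fun m => (m 0, m 1, m 2) with hgdef
    have hginj : Set.InjOn g S := by
      intro m hm m' hm' he
      have e0 : m 0 = m' 0 := congrArg Prod.fst he
      have e1 : m 1 = m' 1 := congrArg Prod.fst (congrArg Prod.snd he)
      have e2 : m 2 = m' 2 := congrArg Prod.snd (congrArg Prod.snd he)
      have e3 : m 3 = m' 3 := by
        have s1 := hm.2
        have s2 := hm'.2
        rw [e0, e1, e2] at s1
        have : β 3 * m 3 = β 3 * m' 3 := by linarith
        exact mul_left_cancel₀ hβ3 this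
      funext j
      fin_cases j <;> assumption
    have hgsub : g '' S ⊆ ↑F := by
      rintro _ ⟨m, hm, rfl⟩
      rw [hFdef]
      simp only [Finset.coe_product, Set.mem_prod, Finset.mem_coe, Finset.mem_Icc]
      obtain ⟨p0, q0⟩ := (hmem (η 0) _).1 (hm.1 0)
      obtain ⟨p1, q1⟩ := (hmem (η 1) _).1 (hm.1 1)
      obtain ⟨p2, q2⟩ := (hmem (η 2) _).1 (hm.1 2)
      exact ⟨⟨Int.ceil_le.2 p0, Int.le_floor.2 q0⟩,
        ⟨Int.ceil_le.2 p1, Int.le_floor.2 q1⟩,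
        ⟨Int.ceil_le.2 p2, Int.le_floor.2 q2⟩⟩
    have hchain : S.ncard ≤ F.card := by
      calc S.ncard = (g '' S).ncard := (Set.ncard_image_of_injOn hginj).symm
        _ ≤ (↑F : Set (ℤ × ℤ × ℤ)).ncard :=
            Set.ncard_le_ncard hgsub (Finset.finite_toSet F)
        _ = F.card := Set.ncard_coe_finset F
    have hFbound : ((F.card : ℕ) : ℝ) ≤ (3*δ) * ((3*δ) * (3*δ)) := by
      have hFcard : F.card =
          (⌊η 0 * T + δ⌋ + 1 - ⌈η 0 * T - δ⌉).toNat *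
          ((⌊η 1 * T + δ⌋ + 1 - ⌈η 1 * T - δ⌉).toNat *
           (⌊η 2 * T + δ⌋ + 1 - ⌈η 2 * T - δ⌉).toNat) := by
        rw [hFdef, Finset.card_product, Finset.card_product,
          Int.card_Icc, Int.card_Icc, Int.card_Icc]
      have key : ∀ x : ℝ, (((⌊x + δ⌋ + 1 - ⌈x - δ⌉).toNat : ℕ) : ℝ) ≤ 3*δ := by
        intro x
        apply aux_toNat_cast_le (by linarith)
        push_cast
        have hf : (⌊x + δ⌋ : ℝ) ≤ x + δ := Int.floor_le _
        have hc : x - δ ≤ (⌈x - δ⌉ : ℝ) := Int.le_ceil _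
        linarith
      rw [hFcard]
      push_cast
      have k0 := key (η 0 * T)
      have k1 := key (η 1 * T)
      have k2 := key (η 2 * T)
      exact mul_le_mul k0 (mul_le_mul k1 k2 (by positivity) (by linarith))
        (by positivity) (by linarith)
    have heq : (3*δ) * ((3*δ) * (3*δ)) = 27 * B / L ^ 3 := by
      have : (3*δ) * ((3*δ) * (3*δ)) = 27 * δ ^ 3 := by ring
      rw [this, hδcube]; ring
    rw [hJB]
    calc ((S.ncard : ℕ) : ℝ) ≤ ((F.card : ℕ) : ℝ) := by exact_mod_cast hchain
      _ ≤ (3*δ) * ((3*δ) * (3*δ)) := hFbound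
      _ = 27 * B / L ^ 3 := heq
end

section
/- Let p₁, p₂, p₃, p₄ be pairwise distinct primes and β₁,β₂,β₃,β₄ ∈ {−1,1} with β₁p₁ + β₂p₂ + β₃p₃ + β₄p₄ = 0. Define xᵢ = ∏_{j ≠ i} βⱼpⱼ for i = 1,…,4. Then gcd(x₁,x₂,x₃,x₄) = 1, x₂x₃x₄ + x₁x₃x₄ + x₁x₂x₄ + x₁x₂x₃ = 0, x₁x₂x₃x₄ ≠ 0, xᵢ + xⱼ ≠ 0 for all i ≠ j, and moreover |x₁x₂x₃x₄| = (p₁p₂p₃p₄)³, so that |x₁x₂x₃x₄| has exactly 12 prime factors counted with multiplicity and exactly 4 distinct prime factors. -/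
/-- Specialization of the converse of Lemma 3 used in Section 4: for pairwise distinct primes
`p₁,…,p₄` and signs `βⱼ` with `β₁p₁+β₂p₂+β₃p₃+β₄p₄ = 0`, the point `xᵢ = ∏_{j≠i} βⱼpⱼ` is a
primitive integral point of `U₀` with `|x₁x₂x₃x₄| = (p₁p₂p₃p₄)³`, having exactly 12 prime
factors with multiplicity and exactly 4 distinct prime factors. -/
theorem prime_quadruple_gives_point
    (p : Fin 4 → ℕ) (hp : ∀ i, (p i).Prime)
    (hdist : ∀ i j, i ≠ j → p i ≠ p j)
    (β : Fin 4 → ℤ) (hβ : ∀ i, β i = 1 ∨ β i = -1)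
    (hrel : β 0 * (p 0 : ℤ) + β 1 * (p 1 : ℤ) + β 2 * (p 2 : ℤ) + β 3 * (p 3 : ℤ) = 0)
    (x : Fin 4 → ℤ)
    (hx : ∀ i, x i = ∏ j ∈ Finset.univ.erase i, β j * (p j : ℤ)) :
    Int.gcd (Int.gcd (x 0) (x 1)) (Int.gcd (x 2) (x 3)) = 1 ∧
    x 1 * x 2 * x 3 + x 0 * x 2 * x 3 + x 0 * x 1 * x 3 + x 0 * x 1 * x 2 = 0 ∧
    x 0 * x 1 * x 2 * x 3 ≠ 0 ∧
    (∀ i j, i ≠ j → x i + x j ≠ 0) ∧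
    (x 0 * x 1 * x 2 * x 3).natAbs = (p 0 * p 1 * p 2 * p 3) ^ 3 ∧
    (x 0 * x 1 * x 2 * x 3).natAbs.primeFactorsList.length = 12 ∧
    (x 0 * x 1 * x 2 * x 3).natAbs.primeFactors.card = 4 := by
  set y : Fin 4 → ℤ := fun i => β i * (p i : ℤ) with hy
  have hyabs : ∀ i, (y i).natAbs = p i := by
    intro i
    rcases hβ i with h | h <;> simp [hy, h, Int.natAbs_mul]
  have hyne : ∀ i, y i ≠ 0 := by
    intro i h
    have h2 := hyabs i
    rw [h] at h2
    exact (hp i).ne_zero h2.symm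
  have hx0 : x 0 = y 1 * y 2 * y 3 := by
    rw [hx, show (Finset.univ.erase (0:Fin 4)) = {1,2,3} from by decide]
    simp [hy, Finset.prod_insert, mul_assoc]
  have hx1 : x 1 = y 0 * y 2 * y 3 := by
    rw [hx, show (Finset.univ.erase (1:Fin 4)) = {0,2,3} from by decide]
    simp [hy, Finset.prod_insert, mul_assoc]
  have hx2 : x 2 = y 0 * y 1 * y 3 := by
    rw [hx, show (Finset.univ.erase (2:Fin 4)) = {0,1,3} from by decide]
    simp [hy, Finset.prod_insert, mul_assoc]
  have hx3 : x 3 = y 0 * y 1 * y 2 := by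
    rw [hx, show (Finset.univ.erase (3:Fin 4)) = {0,1,2} from by decide]
    simp [hy, Finset.prod_insert, mul_assoc]
  have hrel' : y 0 + y 1 + y 2 + y 3 = 0 := hrel
  have habs : ∀ i j k : Fin 4, (y i * y j * y k).natAbs = p i * p j * p k := by
    intro i j k
    rw [Int.natAbs_mul, Int.natAbs_mul, hyabs, hyabs, hyabs]
  -- sums of two y's nonzero
  have hysum : ∀ i j, i ≠ j → y i + y j ≠ 0 := by
    intro i j hij h
    have : y i = -y j := by linarith
    have h2 : (y i).natAbs = (y j).natAbs := by rw [this, Int.natAbs_neg]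
    rw [hyabs, hyabs] at h2
    exact hdist i j hij h2
  have hN : (x 0 * x 1 * x 2 * x 3).natAbs = (p 0 * p 1 * p 2 * p 3) ^ 3 := by
    rw [hx0, hx1, hx2, hx3,
      show y 1 * y 2 * y 3 * (y 0 * y 2 * y 3) * (y 0 * y 1 * y 3) * (y 0 * y 1 * y 2)
        = (y 0 * y 1 * y 2 * y 3) ^ 3 from by ring, Int.natAbs_pow, Int.natAbs_mul,
      Int.natAbs_mul, Int.natAbs_mul, hyabs, hyabs, hyabs, hyabs]
  refine ⟨?_, ?_, ?_, ?_, ?_, ?_, ?_⟩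
  · -- gcd = 1
    by_contra hg
    obtain ⟨q, hq, hqd⟩ := Nat.exists_prime_and_dvd hg
    have d0 : q ∣ (x 0).natAbs := (Nat.dvd_gcd_iff.mp ((Nat.dvd_gcd_iff.mp hqd).1)).1
    have d1 : q ∣ (x 1).natAbs := (Nat.dvd_gcd_iff.mp ((Nat.dvd_gcd_iff.mp hqd).1)).2
    have d2 : q ∣ (x 2).natAbs := (Nat.dvd_gcd_iff.mp ((Nat.dvd_gcd_iff.mp hqd).2)).1
    have d3 : q ∣ (x 3).natAbs := (Nat.dvd_gcd_iff.mp ((Nat.dvd_gcd_iff.mp hqd).2)).2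
    rw [hx0, habs] at d0
    rw [hx1, habs] at d1
    rw [hx2, habs] at d2
    rw [hx3, habs] at d3
    have e0 : q = p 1 ∨ q = p 2 ∨ q = p 3 := by
      rcases (Nat.Prime.dvd_mul hq).mp d0 with h | h
      · rcases (Nat.Prime.dvd_mul hq).mp h with h' | h'
        · exact Or.inl ((Nat.prime_dvd_prime_iff_eq hq (hp 1)).mp h')
        · exact Or.inr (Or.inl ((Nat.prime_dvd_prime_iff_eq hq (hp 2)).mp h'))
      · exact Or.inr (Or.inr ((Nat.prime_dvd_prime_iff_eq hq (hp 3)).mp h))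
    have e1 : q = p 0 ∨ q = p 2 ∨ q = p 3 := by
      rcases (Nat.Prime.dvd_mul hq).mp d1 with h | h
      · rcases (Nat.Prime.dvd_mul hq).mp h with h' | h'
        · exact Or.inl ((Nat.prime_dvd_prime_iff_eq hq (hp 0)).mp h')
        · exact Or.inr (Or.inl ((Nat.prime_dvd_prime_iff_eq hq (hp 2)).mp h'))
      · exact Or.inr (Or.inr ((Nat.prime_dvd_prime_iff_eq hq (hp 3)).mp h))
    have e2 : q = p 0 ∨ q = p 1 ∨ q = p 3 := by
      rcases (Nat.Prime.dvd_mul hq).mp d2 with h | h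
      · rcases (Nat.Prime.dvd_mul hq).mp h with h' | h'
        · exact Or.inl ((Nat.prime_dvd_prime_iff_eq hq (hp 0)).mp h')
        · exact Or.inr (Or.inl ((Nat.prime_dvd_prime_iff_eq hq (hp 1)).mp h'))
      · exact Or.inr (Or.inr ((Nat.prime_dvd_prime_iff_eq hq (hp 3)).mp h))
    have e3 : q = p 0 ∨ q = p 1 ∨ q = p 2 := by
      rcases (Nat.Prime.dvd_mul hq).mp d3 with h | h
      · rcases (Nat.Prime.dvd_mul hq).mp h with h' | h'
        · exact Or.inl ((Nat.prime_dvd_prime_iff_eq hq (hp 0)).mp h')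
        · exact Or.inr (Or.inl ((Nat.prime_dvd_prime_iff_eq hq (hp 1)).mp h'))
      · exact Or.inr (Or.inr ((Nat.prime_dvd_prime_iff_eq hq (hp 2)).mp h))
    have D : ∀ i j : Fin 4, i ≠ j → p i ≠ p j := hdist
    rcases e0 with rfl | rfl | rfl
    · rcases e1 with h | h | h
      · exact D 1 0 (by decide) h
      · exact D 1 2 (by decide) h
      · exact D 1 3 (by decide) h
    · rcases e2 with h | h | h
      · exact D 2 0 (by decide) h
      · exact D 2 1 (by decide) h
      · exact D 2 3 (by decide) h
    · rcases e3 with h | h | h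
      · exact D 3 0 (by decide) h
      · exact D 3 1 (by decide) h
      · exact D 3 2 (by decide) h
  · rw [hx0, hx1, hx2, hx3]
    linear_combination (y 0 * y 1 * y 2 * y 3)^2 * hrel'
  · intro h
    rw [h, Int.natAbs_zero] at hN
    exact (pow_ne_zero 3 (mul_ne_zero (mul_ne_zero (mul_ne_zero (hp 0).ne_zero
      (hp 1).ne_zero) (hp 2).ne_zero) (hp 3).ne_zero)) hN.symm
  · have h01 : x 0 + x 1 ≠ 0 := by
      rw [hx0, hx1, show y 1 * y 2 * y 3 + y 0 * y 2 * y 3 = y 2 * y 3 * (y 0 + y 1) from by ring]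
      exact mul_ne_zero (mul_ne_zero (hyne 2) (hyne 3)) (hysum 0 1 (by decide))
    have h02 : x 0 + x 2 ≠ 0 := by
      rw [hx0, hx2, show y 1 * y 2 * y 3 + y 0 * y 1 * y 3 = y 1 * y 3 * (y 0 + y 2) from by ring]
      exact mul_ne_zero (mul_ne_zero (hyne 1) (hyne 3)) (hysum 0 2 (by decide))
    have h03 : x 0 + x 3 ≠ 0 := by
      rw [hx0, hx3, show y 1 * y 2 * y 3 + y 0 * y 1 * y 2 = y 1 * y 2 * (y 0 + y 3) from by ring]
      exact mul_ne_zero (mul_ne_zero (hyne 1) (hyne 2)) (hysum 0 3 (by decide))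
    have h12 : x 1 + x 2 ≠ 0 := by
      rw [hx1, hx2, show y 0 * y 2 * y 3 + y 0 * y 1 * y 3 = y 0 * y 3 * (y 1 + y 2) from by ring]
      exact mul_ne_zero (mul_ne_zero (hyne 0) (hyne 3)) (hysum 1 2 (by decide))
    have h13 : x 1 + x 3 ≠ 0 := by
      rw [hx1, hx3, show y 0 * y 2 * y 3 + y 0 * y 1 * y 2 = y 0 * y 2 * (y 1 + y 3) from by ring]
      exact mul_ne_zero (mul_ne_zero (hyne 0) (hyne 2)) (hysum 1 3 (by decide))
    have h23 : x 2 + x 3 ≠ 0 := by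
      rw [hx2, hx3, show y 0 * y 1 * y 3 + y 0 * y 1 * y 2 = y 0 * y 1 * (y 2 + y 3) from by ring]
      exact mul_ne_zero (mul_ne_zero (hyne 0) (hyne 1)) (hysum 2 3 (by decide))
    have h10 : x 1 + x 0 ≠ 0 := by rwa [add_comm]
    have h20 : x 2 + x 0 ≠ 0 := by rwa [add_comm]
    have h30 : x 3 + x 0 ≠ 0 := by rwa [add_comm]
    have h21 : x 2 + x 1 ≠ 0 := by rwa [add_comm]
    have h31 : x 3 + x 1 ≠ 0 := by rwa [add_comm]
    have h32 : x 3 + x 2 ≠ 0 := by rwa [add_comm]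
    intro i j hij
    fin_cases i <;> fin_cases j <;>
      first
        | exact absurd rfl hij
        | exact h01 | exact h02 | exact h03 | exact h12 | exact h13 | exact h23
        | exact h10 | exact h20 | exact h30 | exact h21 | exact h31 | exact h32
  · exact hN
  · rw [hN]
    have pne : ∀ i : Fin 4, p i ^ 3 ≠ 0 := fun i => pow_ne_zero 3 (hp i).ne_zero
    rw [← ArithmeticFunction.cardFactors_apply,
      show (p 0 * p 1 * p 2 * p 3) ^ 3 = p 0 ^ 3 * p 1 ^ 3 * p 2 ^ 3 * p 3 ^ 3 from by ring,
      ArithmeticFunction.cardFactors_mul (mul_ne_zero (mul_ne_zero (pne 0) (pne 1)) (pne 2)) (pne 3),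
      ArithmeticFunction.cardFactors_mul (mul_ne_zero (pne 0) (pne 1)) (pne 2),
      ArithmeticFunction.cardFactors_mul (pne 0) (pne 1),
      ArithmeticFunction.cardFactors_apply_prime_pow (hp 0),
      ArithmeticFunction.cardFactors_apply_prime_pow (hp 1),
      ArithmeticFunction.cardFactors_apply_prime_pow (hp 2),
      ArithmeticFunction.cardFactors_apply_prime_pow (hp 3)]
  · rw [hN, Nat.primeFactors_pow _ (by norm_num),
      Nat.primeFactors_mul (mul_ne_zero (mul_ne_zero (hp 0).ne_zero (hp 1).ne_zero) (hp 2).ne_zero) (hp 3).ne_zero,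
      Nat.primeFactors_mul (mul_ne_zero (hp 0).ne_zero (hp 1).ne_zero) (hp 2).ne_zero,
      Nat.primeFactors_mul (hp 0).ne_zero (hp 1).ne_zero,
      (hp 0).primeFactors, (hp 1).primeFactors, (hp 2).primeFactors, (hp 3).primeFactors,
      Finset.union_assoc, Finset.union_assoc, ← Finset.insert_eq, ← Finset.insert_eq,
      ← Finset.insert_eq]
    rw [Finset.card_insert_of_notMem
        (by simp [hdist 0 1 (by decide), hdist 0 2 (by decide), hdist 0 3 (by decide)]),
      Finset.card_insert_of_notMem
        (by simp [hdist 1 2 (by decide), hdist 1 3 (by decide)]),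
      Finset.card_insert_of_notMem (by simp [hdist 2 3 (by decide)])]
    simp
end
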